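/- Let α = (l−1)r + n + 1 with l ∈ ℤ and 0 ≤ n ≤ r−2. Then the linear span S of v_{n+1}, …, v_{r−1} is the unique nonzero proper Ū-submodule of V_α; moreover S is isomorphic as a Ū-module to S_{r−n−2}^{(l−1)r}, the quotient V_α/S is isomorphic to S_n^{lr}, and the resulting short exact sequence 0 → S_{r−n−2}^{(l−1)r} → V_α → S_n^{lr} → 0 does not split. -/

import Mathlib

noncomputable section

open scoped TensorProduct

namespace Unrolled

/-- `q^z = exp(π √-1 z / r)`. -/
def qc (r : ℕ) (z : ℂ) : ℂ := Complex.exp (Real.pi * Complex.I * z / r)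

/-- `{z} = q^z - q^{-z}`. -/
def qbrk (r : ℕ) (z : ℂ) : ℂ := qc r z - qc r (-z)

/-- `[z] = {z}/{1}`. -/
def qint (r : ℕ) (z : ℂ) : ℂ := qbrk r z / qbrk r 1

/-- `{n}! = ∏_{i=1}^n {i}`. -/
def qbrkFact (r n : ℕ) : ℂ := ∏ i ∈ Finset.range n, qbrk r ((i : ℂ) + 1)

/-- `[n]! = ∏_{i=1}^n [i]`. -/
def qintFact (r n : ℕ) : ℂ := ∏ i ∈ Finset.range n, qint r ((i : ℂ) + 1)

/-- The data of five operators `K, K⁻¹, H, E, F` on a complex vector space. -/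
structure Ops (V : Type) [AddCommGroup V] [Module ℂ V] where
  K : Module.End ℂ V
  Kinv : Module.End ℂ V
  H : Module.End ℂ V
  E : Module.End ℂ V
  F : Module.End ℂ V

/-- A module over the restricted unrolled quantum group `Ū = Ū_q^H(sl₂(ℂ))`:
five operators satisfying the defining relations of `Ū`. -/
structure Rep (r : ℕ) (V : Type) [AddCommGroup V] [Module ℂ V] extends Ops V where
  rel_KKinv : K * Kinv = 1
  rel_KinvK : Kinv * K = 1
  rel_HK : H * K = K * H
  rel_HE : H * E - E * H = (2 : ℂ) • E
  rel_HF : H * F - F * H = (-2 : ℂ) • F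
  rel_KE : K * E = qc r 2 • (E * K)
  rel_KF : K * F = qc r (-2) • (F * K)
  rel_EF : E * F - F * E = (qbrk r 1)⁻¹ • (K - Kinv)
  rel_Er : E ^ r = 0
  rel_Fr : F ^ r = 0

variable {V W U : Type} [AddCommGroup V] [Module ℂ V] [AddCommGroup W] [Module ℂ W]
  [AddCommGroup U] [Module ℂ U]

/-- A `Ū`-submodule: a subspace invariant under the five operators. -/
def Ops.Invariant (A : Ops V) (p : Submodule ℂ V) : Prop :=
  (∀ v ∈ p, A.K v ∈ p) ∧ (∀ v ∈ p, A.Kinv v ∈ p) ∧ (∀ v ∈ p, A.H v ∈ p) ∧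
    (∀ v ∈ p, A.E v ∈ p) ∧ (∀ v ∈ p, A.F v ∈ p)

/-- A simple `Ū`-module: nonzero, with no nonzero proper invariant subspace. -/
def Ops.IsSimple (A : Ops V) : Prop :=
  (∃ v : V, v ≠ 0) ∧ ∀ p : Submodule ℂ V, A.Invariant p → p = ⊥ ∨ p = ⊤

/-- A weight module: finite dimensional, a direct sum of `H`-eigenspaces, on which `K`
acts by `q^μ` on the `H`-eigenspace of eigenvalue `μ`. -/
structure IsWeight (r : ℕ) {V : Type} [AddCommGroup V] [Module ℂ V] (A : Ops V) : Prop where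
  finDim : FiniteDimensional ℂ V
  sup_eigenspaces : (⨆ μ : ℂ, Module.End.eigenspace A.H μ) = ⊤
  K_apply : ∀ (μ : ℂ), ∀ v ∈ Module.End.eigenspace A.H μ, A.K v = qc r μ • v

/-- A `Ū`-linear map. -/
def IsEquivariant (A : Ops V) (B : Ops W) (f : V →ₗ[ℂ] W) : Prop :=
  (∀ v, f (A.K v) = B.K (f v)) ∧ (∀ v, f (A.Kinv v) = B.Kinv (f v)) ∧
    (∀ v, f (A.H v) = B.H (f v)) ∧ (∀ v, f (A.E v) = B.E (f v)) ∧
    (∀ v, f (A.F v) = B.F (f v))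

/-- Isomorphism of `Ū`-modules. -/
def OpsIso (A : Ops V) (B : Ops W) : Prop :=
  ∃ e : V ≃ₗ[ℂ] W, IsEquivariant A B (e : V →ₗ[ℂ] W)

/-- The weight `α + r - 1 - 2i` of the basis vector `v_i` of the Verma module `V_α`. -/
def wt (r : ℕ) (α : ℂ) (i : ℕ) : ℂ := α + r - 1 - 2 * i

/-- The coefficient `{i}{i-α}/{1}²` occurring in `E v_i`. -/
def cE (r : ℕ) (α : ℂ) (i : ℕ) : ℂ := qbrk r i * qbrk r ((i : ℂ) - α) / qbrk r 1 ^ 2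

/-- The Verma module `V_α` of highest weight `α + r - 1`, realized on `Fin r → ℂ`
with basis `v_0, …, v_{r-1}`. -/
def vermaOps (r : ℕ) (α : ℂ) : Ops (Fin r → ℂ) where
  K := (Matrix.diagonal fun i : Fin r => qc r (wt r α (i : ℕ))).mulVecLin
  Kinv := (Matrix.diagonal fun i : Fin r => qc r (-wt r α (i : ℕ))).mulVecLin
  H := (Matrix.diagonal fun i : Fin r => wt r α (i : ℕ)).mulVecLin
  E := (Matrix.of fun i j : Fin r =>
    if (j : ℕ) = (i : ℕ) + 1 then cE r α (j : ℕ) else 0).mulVecLin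
  F := (Matrix.of fun i j : Fin r =>
    if (i : ℕ) = (j : ℕ) + 1 then (1 : ℂ) else 0).mulVecLin

/-- `α_{l,n} = (l-1)r + n + 1`, so that `S_n^{lr}` is a quotient of `V_{α_{l,n}}`. -/
def aln (r : ℕ) (l : ℤ) (n : ℕ) : ℂ := ((l : ℂ) - 1) * r + n + 1

/-- The simple module `S_n^{lr}` of highest weight `lr + n` and dimension `n+1`,
realized on `Fin (n+1) → ℂ`. -/
def smodOps (r : ℕ) (l : ℤ) (n : ℕ) : Ops (Fin (n + 1) → ℂ) where
  K := (Matrix.diagonal fun i : Fin (n + 1) => qc r (wt r (aln r l n) (i : ℕ))).mulVecLin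
  Kinv := (Matrix.diagonal fun i : Fin (n + 1) => qc r (-wt r (aln r l n) (i : ℕ))).mulVecLin
  H := (Matrix.diagonal fun i : Fin (n + 1) => wt r (aln r l n) (i : ℕ)).mulVecLin
  E := (Matrix.of fun i j : Fin (n + 1) =>
    if (j : ℕ) = (i : ℕ) + 1 then cE r (aln r l n) (j : ℕ) else 0).mulVecLin
  F := (Matrix.of fun i j : Fin (n + 1) =>
    if (i : ℕ) = (j : ℕ) + 1 then (1 : ℂ) else 0).mulVecLin

/-- `α ∈ (ℂ∖ℤ) ∪ rℤ`. -/
def goodα (r : ℕ) (α : ℂ) : Prop := (¬∃ n : ℤ, α = (n : ℂ)) ∨ ∃ m : ℤ, α = (r : ℂ) * m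

/-- The linear span of `v_{n+1}, …, v_{r-1}` in the Verma module `V_α` on `Fin r → ℂ`. -/
def tailSpan (r n : ℕ) : Submodule ℂ (Fin r → ℂ) :=
  Submodule.span ℂ {w : Fin r → ℂ | ∃ i : Fin r, n + 1 ≤ (i : ℕ) ∧ w = Pi.single i 1}

/-!
The weights of `v_0, …, v_{r-1}` are pairwise distinct, so a `Ū`-submodule of `V_α` is spanned
by the basis vectors it contains. `F` sends `v_i` to `v_{i+1}`, and `E v_i` is a nonzero multiple
of `v_{i-1}` unless `i = n + 1`: for `0 < i < r` the coefficient `{i}{i-α}` vanishes only when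
`i - n - 1 ∈ rℤ`. So a submodule containing some `v_i` with `i ≤ n` is everything, and any other
nonzero submodule is the span of `v_{n+1}, …, v_{r-1}`; being the only proper nonzero submodule,
it has no invariant complement. The identifications with `S_{r-n-2}^{(l-1)r}` and `S_n^{lr}` are
`v_k ↦ v_{n+1+k}` and truncation; the first works because `{k}{k-α_{l-1,r-n-2}}` and
`{n+1+k}{n+1+k-α_{l,n}}` have the same two factors swapped, each up to the sign `(-1)^{l-1}`.
-/

open scoped Matrix

lemma qc_add (r : ℕ) (z w : ℂ) : qc r (z + w) = qc r z * qc r w := by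
  rw [qc, qc, qc, ← Complex.exp_add]; congr 1; ring

lemma qc_natCast_mul_intCast {r : ℕ} (hr : r ≠ 0) (m : ℤ) : qc r (r * m) = (-1) ^ m := by
  have : (Real.pi : ℂ) * Complex.I * (r * m) / r = m * (Real.pi * Complex.I) := by
    field_simp
  rw [qc, this, Complex.exp_int_mul, Complex.exp_pi_mul_I]

lemma qbrk_add_natCast_mul_intCast {r : ℕ} (hr : r ≠ 0) (z : ℂ) (m : ℤ) :
    qbrk r (z + r * m) = (-1) ^ m * qbrk r z := by
  have hneg : -(z + r * m) = -z + r * ((-m : ℤ) : ℂ) := by push_cast; ring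
  rw [qbrk, qbrk, hneg, qc_add, qc_add, qc_natCast_mul_intCast hr,
    qc_natCast_mul_intCast hr, zpow_neg, ← inv_zpow, inv_neg_one]
  ring

lemma qbrk_eq_zero_iff {r : ℕ} (hr : r ≠ 0) (z : ℂ) :
    qbrk r z = 0 ↔ ∃ m : ℤ, z = r * m := by
  rw [qbrk, sub_eq_zero, qc, qc, Complex.exp_eq_exp_iff_exists_int]
  refine exists_congr fun m => ⟨fun h => ?_, fun h => ?_⟩
  · field_simp at h
    linear_combination h / 2
  · subst h
    field_simp
    ring

lemma qbrk_intCast_eq_zero_iff {r : ℕ} (hr : r ≠ 0) (k : ℤ) :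
    qbrk r k = 0 ↔ (r : ℤ) ∣ k := by
  rw [qbrk_eq_zero_iff hr]
  exact exists_congr fun m => by norm_cast

lemma qbrk_intCast_ne_zero {r : ℕ} {k : ℤ} (hk0 : k ≠ 0) (hkr : |k| < r) : qbrk r k ≠ 0 := by
  have hr : r ≠ 0 := by rintro rfl; exact absurd hkr (by simp)
  rw [Ne, qbrk_intCast_eq_zero_iff hr]
  exact fun hdvd => hk0 (Int.eq_zero_of_abs_lt_dvd hdvd hkr)

lemma cE_self {r : ℕ} (hr : r ≠ 0) (α : ℂ) : cE r α r = 0 := by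
  have : qbrk r r = 0 := (qbrk_eq_zero_iff hr _).2 ⟨1, by simp⟩
  simp [cE, this]

lemma natCast_sub_aln (r : ℕ) (l : ℤ) (n k : ℕ) :
    (k : ℂ) - aln r l n = (((k : ℤ) - n - 1 : ℤ) : ℂ) + r * ((1 - l : ℤ) : ℂ) := by
  push_cast [aln]; ring

lemma cE_aln_succ {r : ℕ} (hr : r ≠ 0) (l : ℤ) (n : ℕ) : cE r (aln r l n) (n + 1) = 0 := by
  rw [cE, Nat.cast_succ, ← Nat.cast_succ, natCast_sub_aln, qbrk_add_natCast_mul_intCast hr]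
  simp [qbrk]

lemma cE_aln_ne_zero {r : ℕ} (l : ℤ) {n i : ℕ} (hn : n + 1 < r) (hi0 : 0 < i) (hir : i < r)
    (hin : i ≠ n + 1) : cE r (aln r l n) i ≠ 0 := by
  have hr : r ≠ 0 := by omega
  have hi : qbrk r (i : ℂ) ≠ 0 := by
    exact_mod_cast qbrk_intCast_ne_zero (k := i) (by omega) (by rw [abs_lt]; omega)
  have hsub : qbrk r (((i : ℤ) - n - 1 : ℤ) : ℂ) ≠ 0 :=
    qbrk_intCast_ne_zero (by omega) (by rw [abs_lt]; omega)
  have h1 : qbrk r 1 ≠ 0 := by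
    exact_mod_cast qbrk_intCast_ne_zero (k := 1) one_ne_zero (by simp; omega)
  rw [cE, natCast_sub_aln, qbrk_add_natCast_mul_intCast hr]
  exact div_ne_zero (mul_ne_zero hi (mul_ne_zero (zpow_ne_zero _ (by norm_num)) hsub))
    (pow_ne_zero 2 h1)

lemma aln_complement {r n : ℕ} (h : n + 2 ≤ r) (l : ℤ) :
    aln r (l - 1) (r - n - 2) = aln r l n - 2 * (n + 1) := by
  rw [aln, aln, Nat.cast_sub (by omega), Nat.cast_sub (by omega)]
  push_cast; ring

lemma wt_aln_complement {r n : ℕ} (h : n + 2 ≤ r) (l : ℤ) (k : ℕ) :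
    wt r (aln r (l - 1) (r - n - 2)) k = wt r (aln r l n) (n + 1 + k) := by
  rw [wt, wt, aln_complement h]; push_cast; ring

lemma cE_aln_complement {r n : ℕ} (h : n + 2 ≤ r) (l : ℤ) (k : ℕ) :
    cE r (aln r (l - 1) (r - n - 2)) k = cE r (aln r l n) (n + 1 + k) := by
  have hr : r ≠ 0 := by omega
  have e1 : (k : ℂ) - aln r (l - 1) (r - n - 2) =
      ((n + 1 + k : ℕ) : ℂ) + r * ((1 - l : ℤ) : ℂ) := by
    rw [aln_complement h, aln]; push_cast; ring
  have e2 : ((n + 1 + k : ℕ) : ℂ) - aln r l n = (k : ℂ) + r * ((1 - l : ℤ) : ℂ) := by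
    rw [aln]; push_cast; ring
  rw [cE, cE, e1, e2, qbrk_add_natCast_mul_intCast hr, qbrk_add_natCast_mul_intCast hr]
  ring

/-- `v_k ∈ ℂ^m`, with the convention `v_k = 0` for `k ≥ m`. -/
def basisVec (m k : ℕ) : Fin m → ℂ := fun i => if (i : ℕ) = k then 1 else 0

lemma basisVec_val {m : ℕ} (i : Fin m) : basisVec m i = Pi.single i 1 := by
  ext j; simp [basisVec, Pi.single_apply, Fin.val_inj]

lemma diagonal_mulVec_basisVec {m : ℕ} (d : ℕ → ℂ) (k : ℕ) :
    (Matrix.diagonal fun i : Fin m => d i) *ᵥ basisVec m k = d k • basisVec m k := by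
  ext i; by_cases h : (i : ℕ) = k <;> simp [Matrix.mulVec_diagonal, basisVec, h]

lemma shift_mulVec_basisVec {a b : ℕ} (s k : ℕ) (h : a ≤ b + s) :
    (Matrix.of fun (i : Fin a) (j : Fin b) => if (i : ℕ) = j + s then (1 : ℂ) else 0) *ᵥ
      basisVec b k = basisVec a (k + s) := by
  ext i
  simp only [Matrix.mulVec, dotProduct, Matrix.of_apply, basisVec, mul_ite, mul_one, mul_zero]
  by_cases hk : k < b
  · rw [Finset.sum_eq_single ⟨k, hk⟩ (fun j _ hj => by simp [Fin.ext_iff] at hj; simp [hj])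
      (by simp)]
    simp
  · rw [Finset.sum_eq_zero fun j _ => by simp; omega]
    simp; omega

lemma superdiag_mulVec_basisVec_succ {m : ℕ} (c : ℕ → ℂ) (hc : c m = 0) (k : ℕ) :
    (Matrix.of fun i j : Fin m => if (j : ℕ) = (i : ℕ) + 1 then c j else 0) *ᵥ
      basisVec m (k + 1) = c (k + 1) • basisVec m k := by
  ext i
  simp only [Matrix.mulVec, dotProduct, Matrix.of_apply, basisVec, mul_ite, mul_one, mul_zero,
    Pi.smul_apply, smul_eq_mul]
  by_cases hk : k + 1 < m
  · rw [Finset.sum_eq_single ⟨k + 1, hk⟩ (fun j _ hj => by simp [Fin.ext_iff] at hj; simp [hj])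
      (by simp)]
    simp [eq_comm]
  · rw [Finset.sum_eq_zero fun j _ => by simp; omega]
    split_ifs with hik
    · rw [show k + 1 = m by omega, hc]
    · rfl

lemma superdiag_mulVec_basisVec_zero {m : ℕ} (c : ℕ → ℂ) :
    (Matrix.of fun i j : Fin m => if (j : ℕ) = (i : ℕ) + 1 then c j else 0) *ᵥ
      basisVec m 0 = 0 := by
  ext i
  simp only [Matrix.mulVec, dotProduct, Matrix.of_apply, basisVec]
  exact Finset.sum_eq_zero fun j _ => by simp; omega

lemma prod_sub_mul_mem_of_diagonal_invariant {m : ℕ} {d : Fin m → ℂ}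
    {p : Submodule ℂ (Fin m → ℂ)} (hp : ∀ v ∈ p, (Matrix.diagonal d).mulVecLin v ∈ p)
    {w : Fin m → ℂ} (hw : w ∈ p) (s : Finset (Fin m)) :
    (fun t => (∏ j ∈ s, (d t - d j)) * w t) ∈ p := by
  induction s using Finset.induction_on with
  | empty => simpa using hw
  | insert j s hj ih =>
    convert p.sub_mem (hp _ ih) (p.smul_mem (d j) ih) using 1
    ext t
    simp [Finset.prod_insert hj, Matrix.mulVec_diagonal]
    ring

lemma single_mem_of_diagonal_invariant {m : ℕ} {d : Fin m → ℂ} (hd : Function.Injective d)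
    {p : Submodule ℂ (Fin m → ℂ)} (hp : ∀ v ∈ p, (Matrix.diagonal d).mulVecLin v ∈ p)
    {w : Fin m → ℂ} (hw : w ∈ p) {i : Fin m} (hi : w i ≠ 0) : Pi.single i 1 ∈ p := by
  -- `∏_{j ≠ i} (H - d j)` kills every coordinate but the `i`-th.
  have hmem := prod_sub_mul_mem_of_diagonal_invariant hp hw (Finset.univ.erase i)
  have hc : (∏ j ∈ Finset.univ.erase i, (d i - d j)) * w i ≠ 0 :=
    mul_ne_zero (Finset.prod_ne_zero_iff.2 fun j hj =>
      sub_ne_zero.2 fun h => (Finset.mem_erase.1 hj).1 (hd h).symm) hi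
  refine (p.smul_mem_iff hc).1 ?_
  convert hmem using 1
  ext t
  rcases eq_or_ne t i with rfl | ht
  · simp
  · simp [ht, Finset.prod_eq_zero (f := fun j => d t - d j)
      (Finset.mem_erase.2 ⟨ht, Finset.mem_univ t⟩) (sub_self (d t))]

lemma ext_basisVec {m : ℕ} {g₁ g₂ : (Fin m → ℂ) →ₗ[ℂ] W}
    (h : ∀ i : Fin m, g₁ (basisVec m i) = g₂ (basisVec m i)) : g₁ = g₂ :=
  (Pi.basisFun ℂ (Fin m)).ext fun i => by simpa [basisVec_val] using h i

lemma isEquivariant_of_basisVec {m : ℕ} {A : Ops (Fin m → ℂ)} {B : Ops W}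
    {f : (Fin m → ℂ) →ₗ[ℂ] W}
    (hK : ∀ i : Fin m, f (A.K (basisVec m i)) = B.K (f (basisVec m i)))
    (hKinv : ∀ i : Fin m, f (A.Kinv (basisVec m i)) = B.Kinv (f (basisVec m i)))
    (hH : ∀ i : Fin m, f (A.H (basisVec m i)) = B.H (f (basisVec m i)))
    (hE : ∀ i : Fin m, f (A.E (basisVec m i)) = B.E (f (basisVec m i)))
    (hF : ∀ i : Fin m, f (A.F (basisVec m i)) = B.F (f (basisVec m i))) :
    IsEquivariant A B f :=
  ⟨LinearMap.congr_fun (ext_basisVec (g₁ := f ∘ₗ A.K) (g₂ := B.K ∘ₗ f) hK),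
    LinearMap.congr_fun (ext_basisVec (g₁ := f ∘ₗ A.Kinv) (g₂ := B.Kinv ∘ₗ f) hKinv),
    LinearMap.congr_fun (ext_basisVec (g₁ := f ∘ₗ A.H) (g₂ := B.H ∘ₗ f) hH),
    LinearMap.congr_fun (ext_basisVec (g₁ := f ∘ₗ A.E) (g₂ := B.E ∘ₗ f) hE),
    LinearMap.congr_fun (ext_basisVec (g₁ := f ∘ₗ A.F) (g₂ := B.F ∘ₗ f) hF)⟩

lemma IsEquivariant.invariant_range {A : Ops V} {B : Ops W} {f : V →ₗ[ℂ] W}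
    (hf : IsEquivariant A B f) : B.Invariant (LinearMap.range f) := by
  obtain ⟨hK, hKinv, hH, hE, hF⟩ := hf
  refine ⟨?_, ?_, ?_, ?_, ?_⟩ <;> rintro _ ⟨v, rfl⟩
  exacts [⟨_, hK v⟩, ⟨_, hKinv v⟩, ⟨_, hH v⟩, ⟨_, hE v⟩, ⟨_, hF v⟩]

def ladderOps (r m : ℕ) (α : ℂ) : Ops (Fin m → ℂ) where
  K := (Matrix.diagonal fun i : Fin m => qc r (wt r α (i : ℕ))).mulVecLin
  Kinv := (Matrix.diagonal fun i : Fin m => qc r (-wt r α (i : ℕ))).mulVecLin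
  H := (Matrix.diagonal fun i : Fin m => wt r α (i : ℕ)).mulVecLin
  E := (Matrix.of fun i j : Fin m =>
    if (j : ℕ) = (i : ℕ) + 1 then cE r α (j : ℕ) else 0).mulVecLin
  F := (Matrix.of fun i j : Fin m =>
    if (i : ℕ) = (j : ℕ) + 1 then (1 : ℂ) else 0).mulVecLin

lemma vermaOps_eq_ladderOps (r : ℕ) (α : ℂ) : vermaOps r α = ladderOps r r α := rfl

lemma smodOps_eq_ladderOps (r : ℕ) (l : ℤ) (n : ℕ) :
    smodOps r l n = ladderOps r (n + 1) (aln r l n) := rfl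

section ladderOps

variable (r m : ℕ) (α : ℂ) (k : ℕ)

lemma ladderOps_K_basisVec :
    (ladderOps r m α).K (basisVec m k) = qc r (wt r α k) • basisVec m k :=
  diagonal_mulVec_basisVec (fun i => qc r (wt r α i)) k

lemma ladderOps_Kinv_basisVec :
    (ladderOps r m α).Kinv (basisVec m k) = qc r (-wt r α k) • basisVec m k :=
  diagonal_mulVec_basisVec (fun i => qc r (-wt r α i)) k

lemma ladderOps_H_basisVec :
    (ladderOps r m α).H (basisVec m k) = wt r α k • basisVec m k :=
  diagonal_mulVec_basisVec (fun i => wt r α i) k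

lemma ladderOps_F_basisVec : (ladderOps r m α).F (basisVec m k) = basisVec m (k + 1) :=
  shift_mulVec_basisVec 1 k le_self_add

lemma ladderOps_E_basisVec_zero : (ladderOps r m α).E (basisVec m 0) = 0 :=
  superdiag_mulVec_basisVec_zero _

variable {r m α} in
lemma ladderOps_E_basisVec_succ (hm : cE r α m = 0) :
    (ladderOps r m α).E (basisVec m (k + 1)) = cE r α (k + 1) • basisVec m k :=
  superdiag_mulVec_basisVec_succ (cE r α) hm k

end ladderOps

lemma wt_injective (r : ℕ) (α : ℂ) : Function.Injective (wt r α) := fun i j h => by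
  have : (i : ℂ) = j := by simp only [wt] at h; linear_combination (-1 / 2 : ℂ) * h
  exact_mod_cast this

lemma mem_tailSpan_iff {r n : ℕ} {w : Fin r → ℂ} :
    w ∈ tailSpan r n ↔ ∀ i : Fin r, (i : ℕ) ≤ n → w i = 0 := by
  refine ⟨fun hw i hi => ?_, fun hw => ?_⟩
  · induction hw using Submodule.span_induction with
    | mem x hx =>
      obtain ⟨j, hj, rfl⟩ := hx
      exact Pi.single_eq_of_ne (fun h => by rw [h] at hi; omega) _
    | zero => rfl
    | add x y _ _ hx hy => simp [hx, hy]
    | smul a x _ hx => simp [hx]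
  · rw [← Finset.univ_sum_single w]
    refine Submodule.sum_mem _ fun i _ => ?_
    by_cases hi : (i : ℕ) ≤ n
    · simp [hw i hi]
    · convert (tailSpan r n).smul_mem (w i) (Submodule.subset_span ⟨i, by omega, rfl⟩) using 1
      rw [← Pi.single_smul, smul_eq_mul, mul_one]

lemma tailSpan_ne_bot {r n : ℕ} (h : n + 2 ≤ r) : tailSpan r n ≠ ⊥ := by
  intro hbot
  have hmem : Pi.single (⟨n + 1, by omega⟩ : Fin r) (1 : ℂ) ∈ tailSpan r n :=
    Submodule.subset_span ⟨_, le_rfl, rfl⟩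
  simp [hbot] at hmem

lemma tailSpan_ne_top {r n : ℕ} (h : n + 2 ≤ r) : tailSpan r n ≠ ⊤ := by
  intro htop
  have := mem_tailSpan_iff.1 (htop ▸ Submodule.mem_top : basisVec r 0 ∈ tailSpan r n)
    ⟨0, by omega⟩ (Nat.zero_le n)
  simp [basisVec] at this

section vermaOps

variable {r : ℕ} {α : ℂ} {p : Submodule ℂ (Fin r → ℂ)}

lemma basisVec_mem_of_le (hp : (vermaOps r α).Invariant p) {i j : ℕ} (hi : basisVec r i ∈ p)
    (hij : i ≤ j) : basisVec r j ∈ p := by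
  induction j, hij using Nat.le_induction with
  | base => exact hi
  | succ j _ ih =>
    obtain ⟨-, -, -, -, hF⟩ := hp
    have hF := hF _ ih
    rwa [vermaOps_eq_ladderOps, ladderOps_F_basisVec] at hF

lemma basisVec_mem_of_ge (hp : (vermaOps r α).Invariant p) {i j : ℕ} (hj : basisVec r j ∈ p)
    (hjr : j < r) (hij : i ≤ j) (hcE : ∀ t, i < t → t ≤ j → cE r α t ≠ 0) :
    basisVec r i ∈ p := by
  induction j, hij using Nat.le_induction with
  | base => exact hj
  | succ j _ ih =>
    obtain ⟨-, -, -, hE, -⟩ := hp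
    have hE := hE _ hj
    rw [vermaOps_eq_ladderOps, ladderOps_E_basisVec_succ _ (cE_self (by omega) α)] at hE
    exact ih ((p.smul_mem_iff (hcE _ (by omega) le_rfl)).1 hE) (by omega)
      fun t ht htj => hcE t ht (by omega)

lemma basisVec_mem_of_apply_ne_zero (hp : (vermaOps r α).Invariant p) {w : Fin r → ℂ}
    (hw : w ∈ p) {i : Fin r} (hi : w i ≠ 0) : basisVec r i ∈ p :=
  basisVec_val i ▸ single_mem_of_diagonal_invariant
    ((wt_injective r α).comp Fin.val_injective) hp.2.2.1 hw hi

lemma eq_top_of_basisVec_mem (h : ∀ i : Fin r, basisVec r i ∈ p) : p = ⊤ := by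
  rw [eq_top_iff, ← (Pi.basisFun ℂ (Fin r)).span_eq, Submodule.span_le]
  rintro _ ⟨i, rfl⟩
  simpa [basisVec_val] using h i

end vermaOps

theorem eq_tailSpan_of_invariant {r : ℕ} {l : ℤ} {n : ℕ} (h : n + 2 ≤ r)
    {p : Submodule ℂ (Fin r → ℂ)} (hp : (vermaOps r (aln r l n)).Invariant p)
    (hbot : p ≠ ⊥) (htop : p ≠ ⊤) : p = tailSpan r n := by
  have hcE : ∀ t, 0 < t → t < r → t ≠ n + 1 → cE r (aln r l n) t ≠ 0 :=
    fun t => cE_aln_ne_zero l (by omega)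
  obtain ⟨k, hkp⟩ : ∃ k : Fin r, basisVec r k ∈ p := by
    obtain ⟨w, hw, hw0⟩ := Submodule.exists_mem_ne_zero_of_ne_bot hbot
    obtain ⟨i, hi⟩ := Function.ne_iff.1 hw0
    exact ⟨i, basisVec_mem_of_apply_ne_zero hp hw hi⟩
  have hlow : ∀ i : Fin r, basisVec r i ∈ p → n + 1 ≤ i := by
    refine fun i hi => not_lt.1 fun hin => htop (eq_top_of_basisVec_mem fun j => ?_)
    have h0 := basisVec_mem_of_ge hp hi i.isLt (Nat.zero_le _)
      fun t ht0 hti => hcE t ht0 (by omega) (by omega)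
    exact basisVec_mem_of_le hp h0 (Nat.zero_le _)
  apply le_antisymm
  · refine fun w hw => mem_tailSpan_iff.2 fun i hin => by_contra fun hi => ?_
    have := hlow i (basisVec_mem_of_apply_ne_zero hp hw hi)
    omega
  · rw [tailSpan, Submodule.span_le]
    rintro _ ⟨i, hi, rfl⟩
    rw [SetLike.mem_coe, ← basisVec_val]
    have hk := hlow k hkp
    rcases le_total (k : ℕ) i with hki | hik
    · exact basisVec_mem_of_le hp hkp hki
    · exact basisVec_mem_of_ge hp hkp k.isLt hik
        fun t hit htk => hcE t (by omega) (by omega) (by omega)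

lemma not_exists_invariant_isCompl {A : Ops V} {S : Submodule ℂ V} (hbot : S ≠ ⊥) (htop : S ≠ ⊤)
    (huniq : ∀ p, A.Invariant p → p ≠ ⊥ → p ≠ ⊤ → p = S) :
    ¬∃ p, A.Invariant p ∧ IsCompl S p := by
  rintro ⟨p, hp, hcompl⟩
  obtain rfl := huniq p hp (fun h => htop (by simpa [h] using hcompl.sup_eq_top))
    (fun h => hbot (by simpa [h] using hcompl.inf_eq_bot))
  exact hbot (by simpa using hcompl.inf_eq_bot)

lemma funLeft_castLE_basisVec {m r : ℕ} (h : m ≤ r) (k : ℕ) :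
    LinearMap.funLeft ℂ ℂ (Fin.castLE h) (basisVec r k) = basisVec m k := by
  ext j; simp [basisVec, LinearMap.funLeft_apply]

lemma ker_funLeft_castLE {r n : ℕ} (h : n + 1 ≤ r) :
    LinearMap.ker (LinearMap.funLeft ℂ ℂ (Fin.castLE h)) = tailSpan r n := by
  ext w
  simp only [LinearMap.mem_ker, mem_tailSpan_iff, funext_iff, LinearMap.funLeft_apply,
    Pi.zero_apply]
  exact ⟨fun hw i hi => hw ⟨i, by omega⟩, fun hw j => hw _ (Nat.lt_succ_iff.1 j.isLt)⟩

lemma isEquivariant_funLeft_castLE {r n : ℕ} (h : n + 1 ≤ r) (l : ℤ) :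
    IsEquivariant (vermaOps r (aln r l n)) (smodOps r l n)
      (LinearMap.funLeft ℂ ℂ (Fin.castLE h)) := by
  have hr : r ≠ 0 := by omega
  rw [vermaOps_eq_ladderOps, smodOps_eq_ladderOps]
  apply isEquivariant_of_basisVec <;> rintro ⟨_ | k, hk⟩ <;>
    simp [ladderOps_K_basisVec, ladderOps_Kinv_basisVec, ladderOps_H_basisVec,
      ladderOps_F_basisVec, ladderOps_E_basisVec_zero,
      ladderOps_E_basisVec_succ _ (cE_self hr _),
      ladderOps_E_basisVec_succ _ (cE_aln_succ hr l n), funLeft_castLE_basisVec]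

def tailInclusion (r n : ℕ) : (Fin (r - n - 2 + 1) → ℂ) →ₗ[ℂ] Fin r → ℂ :=
  (Matrix.of fun (i : Fin r) (j : Fin (r - n - 2 + 1)) =>
    if (i : ℕ) = j + (n + 1) then (1 : ℂ) else 0).mulVecLin

lemma tailInclusion_basisVec {r n : ℕ} (h : n + 2 ≤ r) (k : ℕ) :
    tailInclusion r n (basisVec _ k) = basisVec r (n + 1 + k) :=
  (shift_mulVec_basisVec (n + 1) k (by omega)).trans (by rw [add_comm])

lemma tailInclusion_injective {r n : ℕ} (h : n + 2 ≤ r) :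
    Function.Injective (tailInclusion r n) := by
  let shift : Fin (r - n - 2 + 1) → Fin r := fun j => ⟨n + 1 + j, by omega⟩
  have hinv : LinearMap.funLeft ℂ ℂ shift ∘ₗ tailInclusion r n = LinearMap.id :=
    ext_basisVec fun i => by
      ext j
      simp [tailInclusion_basisVec h, basisVec, LinearMap.funLeft_apply, shift]
  exact Function.LeftInverse.injective (g := LinearMap.funLeft ℂ ℂ shift) fun u => LinearMap.congr_fun hinv u

lemma range_tailInclusion {r n : ℕ} (h : n + 2 ≤ r) :
    LinearMap.range (tailInclusion r n) = tailSpan r n := by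
  apply le_antisymm
  · rintro _ ⟨u, rfl⟩
    refine mem_tailSpan_iff.2 fun i hi => ?_
    simp only [tailInclusion, Matrix.mulVecLin_apply, Matrix.mulVec, dotProduct, Matrix.of_apply,
      ite_mul, one_mul, zero_mul]
    exact Finset.sum_eq_zero fun j _ => if_neg (by omega)
  · rw [tailSpan, Submodule.span_le]
    rintro _ ⟨i, hi, rfl⟩
    exact ⟨basisVec _ (i - (n + 1)), by
      rw [tailInclusion_basisVec h, Nat.add_sub_cancel' hi, basisVec_val]⟩

lemma isEquivariant_tailInclusion {r n : ℕ} (h : n + 2 ≤ r) (l : ℤ) :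
    IsEquivariant (smodOps r (l - 1) (r - n - 2)) (vermaOps r (aln r l n))
      (tailInclusion r n) := by
  have hr : r ≠ 0 := by omega
  rw [vermaOps_eq_ladderOps, smodOps_eq_ladderOps]
  apply isEquivariant_of_basisVec <;> rintro ⟨_ | k, hk⟩ <;>
    simp [ladderOps_K_basisVec, ladderOps_Kinv_basisVec, ladderOps_H_basisVec,
      ladderOps_F_basisVec, ladderOps_E_basisVec_zero,
      ladderOps_E_basisVec_succ _ (cE_self hr _),
      ladderOps_E_basisVec_succ _ (cE_aln_succ hr _ _), cE_aln_succ hr, tailInclusion_basisVec h,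
      wt_aln_complement h, cE_aln_complement h, ← add_assoc]

/-- For `α = (l-1)r + n + 1` with `l ∈ ℤ` and `0 ≤ n ≤ r-2`, the span `S` of
`v_{n+1}, …, v_{r-1}` is the unique nonzero proper `Ū`-submodule of `V_α`; it is
isomorphic to `S_{r-n-2}^{(l-1)r}`, the quotient `V_α/S` is isomorphic to `S_n^{lr}`,
and the short exact sequence `0 → S_{r-n-2}^{(l-1)r} → V_α → S_n^{lr} → 0` does not
split. -/
theorem stmt4 (r : ℕ) (hr : 2 ≤ r) (l : ℤ) (n : ℕ) (hn : n ≤ r - 2) :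
    (vermaOps r (aln r l n)).Invariant (tailSpan r n) ∧
    tailSpan r n ≠ ⊥ ∧ tailSpan r n ≠ ⊤ ∧
    (∀ p : Submodule ℂ (Fin r → ℂ),
      (vermaOps r (aln r l n)).Invariant p → p ≠ ⊥ → p ≠ ⊤ → p = tailSpan r n) ∧
    (∃ f : (Fin (r - n - 2 + 1) → ℂ) →ₗ[ℂ] (Fin r → ℂ),
      Function.Injective f ∧ LinearMap.range f = tailSpan r n ∧
      IsEquivariant (smodOps r (l - 1) (r - n - 2)) (vermaOps r (aln r l n)) f) ∧
    (∃ g : (Fin r → ℂ) →ₗ[ℂ] (Fin (n + 1) → ℂ),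
      Function.Surjective g ∧ LinearMap.ker g = tailSpan r n ∧
      IsEquivariant (vermaOps r (aln r l n)) (smodOps r l n) g) ∧
    ¬∃ p : Submodule ℂ (Fin r → ℂ),
      (vermaOps r (aln r l n)).Invariant p ∧ IsCompl (tailSpan r n) p := by
  have h : n + 2 ≤ r := by omega
  have huniq : ∀ p : Submodule ℂ (Fin r → ℂ),
      (vermaOps r (aln r l n)).Invariant p → p ≠ ⊥ → p ≠ ⊤ → p = tailSpan r n :=
    fun p => eq_tailSpan_of_invariant h
  refine ⟨range_tailInclusion h ▸ (isEquivariant_tailInclusion h l).invariant_range,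
    tailSpan_ne_bot h, tailSpan_ne_top h, huniq,
    ⟨tailInclusion r n, tailInclusion_injective h, range_tailInclusion h,
      isEquivariant_tailInclusion h l⟩,
    ⟨LinearMap.funLeft ℂ ℂ (Fin.castLE (by omega)),
      LinearMap.funLeft_surjective_of_injective _ _ _ (Fin.castLE_injective _),
      ker_funLeft_castLE _, isEquivariant_funLeft_castLE _ l⟩,
    not_exists_invariant_isCompl (tailSpan_ne_bot h) (tailSpan_ne_top h) huniq⟩

end Unrolled
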